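/- arXiv:1406.5835 — 5 statements merged into one kernel-verified Lean document; each statement's English description precedes it below -/
import Mathlib

section
/- Let R be a commutative ring, let h be a formal power series in one variable s over R, let χ denote the constant coefficient of h, and let g ≥ 1 be a natural number. Then in the formal power series ring R[[t]] one has the identity (1 - χ·t)^{g+1} · Σ_{n≥1} c_g(hⁿ)·tⁿ = Σ_{n=1}^{g} c_g((h - χ)ⁿ) · tⁿ · (1 - χ·t)^{g-n}, where c_g(f) denotes the coefficient of s^g in a power series f ∈ R[[s]], χ is regarded as a constant power series, and the finite sum on the right-hand side is a polynomial in t viewed inside R[[t]]. -/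
/-!
Write `h = u + χ` with `u(0) = 0`. Since `uᵏ` is divisible by `sᵏ`, the binomial theorem gives
`c_g(hⁿ) = ∑_{k=1}^{g} c_g(uᵏ) (n choose k) χ^(n-k)` for `g ≥ 1`. Summing over `n`, the series
`∑ₙ (n choose k) χ^(n-k) tⁿ` is `tᵏ / (1 - χt)^(k+1)`, the rescaling of `tᵏ / (1 - t)^(k+1)`, so
multiplying by `(1 - χt)^(g+1)` clears every denominator.
-/

open PowerSeries

namespace PowerSeries

variable {R : Type*} [CommRing R]

theorem coeff_pow_eq_zero_of_constantCoeff_eq_zero {u : R⟦X⟧} (hu : constantCoeff u = 0)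
    {g k : ℕ} (hgk : g < k) : coeff g (u ^ k) = 0 :=
  coeff_of_lt_order _ <|
    (Nat.cast_lt.mpr hgk).trans_le (le_order_pow_of_constantCoeff_eq_zero k hu)

theorem coeff_add_C_pow {u : R⟦X⟧} (hu : constantCoeff u = 0) {g : ℕ} (hg : 1 ≤ g) (χ : R)
    (n : ℕ) :
    coeff g ((u + C χ) ^ n) =
      ∑ k ∈ Finset.Icc 1 g, coeff g (u ^ k) * ((n.choose k : R) * χ ^ (n - k)) := by
  rw [add_pow, map_sum]
  refine Finset.sum_congr_of_eq_on_inter (fun k _ hk => ?_) (fun k _ hk => ?_) (fun k _ _ => ?_)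
  · rcases Nat.eq_zero_or_pos k with rfl | hk0
    · simp [← map_pow, coeff_C, show g ≠ 0 by omega]
    · rw [← map_pow, ← map_natCast C, coeff_mul_C, coeff_mul_C,
        coeff_pow_eq_zero_of_constantCoeff_eq_zero hu (by simp at hk; omega)]
      simp
  · rw [Nat.choose_eq_zero_of_lt (by simpa using hk)]
    simp
  · rw [← map_pow, ← map_natCast C, coeff_mul_C, coeff_mul_C]
    ring

theorem mk_choose_mul_pow_mul_one_sub_C_mul_X_pow_eq_X_pow (χ : R) (k : ℕ) :
    mk (fun n => (n.choose k : R) * χ ^ (n - k)) * (1 - C χ * X) ^ (k + 1) = X ^ k := by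
  have hmk : mk (fun n => (n.choose k : R) * χ ^ (n - k)) =
      X ^ k * rescale χ (mk fun n => ((k + n).choose k : R)) := by
    ext n
    rw [coeff_mk, coeff_X_pow_mul', coeff_rescale, coeff_mk]
    split_ifs with hkn
    · rw [Nat.add_sub_cancel' hkn, mul_comm]
    · simp [Nat.choose_eq_zero_of_lt (not_le.mp hkn)]
  have hinv := congrArg (rescale χ) (mk_add_choose_mul_one_sub_pow_eq_one R k)
  rw [map_mul, map_pow, map_sub, map_one, rescale_X] at hinv
  rw [hmk, mul_assoc, hinv, mul_one]

end PowerSeries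

/-- Let `R` be a commutative ring, `h ∈ R[[s]]` with constant coefficient `χ`, and `g ≥ 1`.
Then in `R[[t]]` one has
`(1 - χt)^(g+1) · Σ_{n≥1} [coeff of s^g in hⁿ]·tⁿ
  = Σ_{n=1}^{g} [coeff of s^g in (h-χ)ⁿ]·tⁿ·(1-χt)^(g-n)`. -/
theorem statement0 (R : Type*) [CommRing R] (h : PowerSeries R) (g : ℕ) (hg : 1 ≤ g)
    (χ : R) (hχ : χ = PowerSeries.constantCoeff h) :
    (1 - PowerSeries.C χ * PowerSeries.X) ^ (g + 1) *
        PowerSeries.mk (fun n => if n = 0 then 0 else PowerSeries.coeff g (h ^ n)) =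
      ∑ n ∈ Finset.Icc 1 g,
        PowerSeries.C (PowerSeries.coeff g ((h - PowerSeries.C χ) ^ n)) *
          PowerSeries.X ^ n * (1 - PowerSeries.C χ * PowerSeries.X) ^ (g - n) := by
  set u := h - C χ
  have hu : constantCoeff u = 0 := by simp [u, hχ]
  have hseries : mk (fun n => if n = 0 then 0 else coeff g (h ^ n)) =
      ∑ k ∈ Finset.Icc 1 g, C (coeff g (u ^ k)) * mk fun n => (n.choose k : R) * χ ^ (n - k) := by
    ext n
    have hcoeff := coeff_add_C_pow hu hg χ n
    rw [sub_add_cancel] at hcoeff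
    rw [coeff_mk, map_sum]
    simp only [coeff_C_mul, coeff_mk]
    split_ifs with hn
    · subst hn
      simpa [coeff_one, show g ≠ 0 by omega] using hcoeff
    · exact hcoeff
  rw [hseries, Finset.mul_sum]
  refine Finset.sum_congr rfl fun k hk => ?_
  obtain ⟨j, rfl⟩ := Nat.exists_eq_add_of_le (Finset.mem_Icc.mp hk).2
  rw [Nat.add_sub_cancel_left, show k + j + 1 = j + (k + 1) by ring]
  linear_combination (1 - C χ * X) ^ j * C (coeff (k + j) (u ^ k)) *
    mk_choose_mul_pow_mul_one_sub_C_mul_X_pow_eq_X_pow χ k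
end

section
/- Let R be a commutative ring, let h be a formal power series in one variable s over R with constant coefficient χ, and let g ≥ 1 be a natural number. Then there exists a polynomial f ∈ R[t] of degree at most g-1 whose constant coefficient f(0) equals the coefficient of s^g in h, such that in R[[t]] one has (1 - χ·t)^{g+1} · Σ_{n≥1} c_g(hⁿ)·tⁿ = t·f(t), where c_g(f) denotes the coefficient of s^g. -/
/-!
Write `h = χ + s·k`. The binomial theorem gives
`c_g(hⁿ) = Σ_{j ≤ g} c_{g-j}(kʲ) · C(n,j) χ^(n-j)`, and `Σₙ C(n,j) χ^(n-j) tⁿ = tʲ / (1 - χt)^(j+1)`.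
Hence `(1 - χt)^(g+1) · Σₙ c_g(hⁿ) tⁿ` is a polynomial of degree at most `g`. Its constant term
`c_g(1)` vanishes for `g ≥ 1`, so it is `t·f(t)`, and `f(0)` is the constant term of
`(1 - χt)^(g+1) · Σₙ c_g(hⁿ⁺¹) tⁿ`, namely `c_g(h)`.
-/

open PowerSeries

namespace PowerSeries

variable {R : Type*} [CommRing R]

theorem one_sub_C_mul_X_pow_mul_mk_choose (c : R) (j : ℕ) :
    (1 - C c * X) ^ (j + 1) * mk (fun n => (n.choose j : R) * c ^ (n - j)) = X ^ j := by
  -- `rescale c` turns `(1 - X)⁻¹^(j+1) = Σ C(j+n, j) Xⁿ` into the expansion of `(1 - cX)⁻¹^(j+1)`.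
  have hinv := congr(rescale c $(mk_add_choose_mul_one_sub_pow_eq_one R j))
  rw [map_mul, map_pow, map_sub, map_one, rescale_X, rescale_mk] at hinv
  have hshift : mk (fun n => (n.choose j : R) * c ^ (n - j)) =
      X ^ j * mk fun n => c ^ n * ((j + n).choose j : R) := by
    ext n
    rw [coeff_X_pow_mul', coeff_mk]
    split_ifs with hjn
    · rw [coeff_mk, Nat.add_sub_cancel' hjn, mul_comm]
    · rw [Nat.choose_eq_zero_of_lt (not_le.mp hjn), Nat.cast_zero, zero_mul]
  rw [hshift, mul_left_comm, mul_comm _ (mk _), hinv, mul_one]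

theorem coeff_pow_X_mul_add_C (k : R⟦X⟧) (c : R) (g n : ℕ) :
    coeff g ((X * k + C c) ^ n) =
      ∑ j ∈ Finset.range (g + 1), coeff (g - j) (k ^ j) * ((n.choose j : R) * c ^ (n - j)) := by
  have hterm (j : ℕ) : coeff g ((X * k) ^ j * C c ^ (n - j) * (n.choose j : R⟦X⟧)) =
      if j ≤ g then coeff (g - j) (k ^ j) * ((n.choose j : R) * c ^ (n - j)) else 0 := by
    have : (X * k) ^ j * C c ^ (n - j) * (n.choose j : R⟦X⟧) =
        C ((n.choose j : R) * c ^ (n - j)) * (X ^ j * k ^ j) := by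
      simp only [map_mul, map_pow, map_natCast]
      ring
    rw [this, coeff_C_mul, coeff_X_pow_mul']
    split_ifs <;> ring
  rw [add_pow, map_sum]
  calc ∑ j ∈ Finset.range (n + 1), coeff g ((X * k) ^ j * C c ^ (n - j) * (n.choose j : R⟦X⟧))
      = ∑ j ∈ Finset.range (n + g + 1),
          coeff g ((X * k) ^ j * C c ^ (n - j) * (n.choose j : R⟦X⟧)) := by
        refine Finset.sum_subset (Finset.range_subset_range.mpr (by omega)) fun j _ hj => ?_
        rw [Finset.mem_range, not_lt] at hj
        rw [Nat.choose_eq_zero_of_lt (by omega), Nat.cast_zero, mul_zero, map_zero]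
    _ = ∑ j ∈ Finset.range (g + 1),
          coeff g ((X * k) ^ j * C c ^ (n - j) * (n.choose j : R⟦X⟧)) := by
        refine (Finset.sum_subset (Finset.range_subset_range.mpr (by omega)) fun j _ hj => ?_).symm
        rw [Finset.mem_range, not_lt] at hj
        rw [hterm, if_neg (by omega)]
    _ = _ := by
        refine Finset.sum_congr rfl fun j hj => ?_
        rw [hterm, if_pos (Nat.lt_succ_iff.mp (Finset.mem_range.mp hj))]

theorem exists_polynomial_eq_one_sub_pow_mul_mk_coeff_pow (h : R⟦X⟧) (g : ℕ) :
    ∃ P : Polynomial R, P.natDegree ≤ g ∧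
      (1 - C (constantCoeff h) * X) ^ (g + 1) * mk (fun n => coeff g (h ^ n)) = (P : R⟦X⟧) := by
  set c := constantCoeff h
  set a : ℕ → R := fun j => coeff (g - j) ((mk fun p => coeff (p + 1) h) ^ j)
  have hseries : mk (fun n => coeff g (h ^ n)) =
      ∑ j ∈ Finset.range (g + 1), C (a j) * mk (fun n => (n.choose j : R) * c ^ (n - j)) := by
    ext n
    simp only [coeff_mk, map_sum, coeff_C_mul]
    conv_lhs => rw [eq_X_mul_shift_add_const h]
    exact coeff_pow_X_mul_add_C _ _ g n
  refine ⟨∑ j ∈ Finset.range (g + 1), Polynomial.C (a j) * Polynomial.X ^ j *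
      (1 - Polynomial.C c * Polynomial.X) ^ (g - j), ?_, ?_⟩
  · refine Polynomial.natDegree_sum_le_of_forall_le _ _ fun j hj => ?_
    have hjg := Finset.mem_range.mp hj
    compute_degree
    omega
  · rw [← Polynomial.coeToPowerSeries.ringHom_apply]
    simp only [map_sum, map_mul, map_pow, map_sub, map_one,
      Polynomial.coeToPowerSeries.ringHom_apply, Polynomial.coe_C, Polynomial.coe_X]
    rw [hseries, Finset.mul_sum]
    refine Finset.sum_congr rfl fun j hj => ?_
    obtain ⟨i, rfl⟩ := Nat.exists_eq_add_of_le (Nat.lt_succ_iff.mp (Finset.mem_range.mp hj))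
    rw [show j + i + 1 = i + (j + 1) by ring, Nat.add_sub_cancel_left, pow_add,
      ← one_sub_C_mul_X_pow_mul_mk_choose c j]
    ring

end PowerSeries

/-- Let `h ∈ R[[s]]` have constant coefficient `χ` and let `g ≥ 1`.  Then there is a polynomial
`f ∈ R[t]` of degree at most `g-1` with constant coefficient equal to the coefficient of `s^g`
in `h`, such that `(1 - χt)^(g+1) · Σ_{n≥1} [coeff of s^g in hⁿ]·tⁿ = t·f(t)` in `R[[t]]`. -/
theorem statement2 (R : Type*) [CommRing R] (h : PowerSeries R) (g : ℕ) (hg : 1 ≤ g)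
    (χ : R) (hχ : χ = PowerSeries.constantCoeff h) :
    ∃ f : Polynomial R, f.natDegree ≤ g - 1 ∧
      f.coeff 0 = PowerSeries.coeff g h ∧
      (1 - PowerSeries.C χ * PowerSeries.X) ^ (g + 1) *
          PowerSeries.mk (fun n => if n = 0 then 0 else PowerSeries.coeff g (h ^ n)) =
        PowerSeries.X * (f : PowerSeries R) := by
  subst hχ
  have hcoeff_one : coeff g (1 : R⟦X⟧) = 0 := by rw [coeff_one, if_neg (by omega)]
  have hseries :
      mk (fun n => if n = 0 then 0 else coeff g (h ^ n)) = mk fun n => coeff g (h ^ n) := by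
    congr 1
    funext n
    split_ifs with hn
    · rw [hn, pow_zero, hcoeff_one]
    · rfl
  have hshift : mk (fun n => coeff g (h ^ n)) = X * mk fun n => coeff g (h ^ (n + 1)) := by
    conv_lhs => rw [eq_X_mul_shift_add_const (mk _)]
    simp [hcoeff_one]
  obtain ⟨P, hPdeg, hP⟩ := exists_polynomial_eq_one_sub_pow_mul_mk_coeff_pow h g
  rw [hshift] at hP
  have hP0 : P.coeff 0 = 0 := by
    rw [← Polynomial.coeff_coe, ← hP, mul_left_comm, coeff_zero_X_mul]
  have hPX : (P : R⟦X⟧) = X * (P.divX : R⟦X⟧) := by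
    conv_lhs => rw [← P.X_mul_divX_add, hP0]
    simp
  have hf : (1 - C (constantCoeff h) * X) ^ (g + 1) * mk (fun n => coeff g (h ^ (n + 1))) =
      (P.divX : R⟦X⟧) := X_mul_cancel (by rw [← hPX, ← hP]; ring)
  refine ⟨P.divX, ?_, ?_, by rw [hseries, hshift, hP, hPX]⟩
  · rw [Polynomial.natDegree_divX_eq_natDegree_tsub_one]
    omega
  · rw [← Polynomial.coeff_coe, ← hf]
    simp
end

section
/- For every natural number n ≥ 1 the following identity holds in ℚ[s]: Dₙ(2 - s) - 2 = s·qₙ(s), where Dₙ is the Dickson polynomial of the first kind with parameter 1 (Mathlib's Polynomial.dickson 1 1 n, characterized by Dₙ(x + x⁻¹) = xⁿ + x⁻ⁿ), and qₙ(s) = -Σ_{e=1}^{n} (binomial(n+e, n-e) · 2n/(n+e)) · (-s)^{e-1}. Equivalently, substituting s = 2 - x - x⁻¹ into s·qₙ(s) yields xⁿ + x⁻ⁿ - 2 in the Laurent polynomial ring. -/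
open Polynomial

section AuxStatement5
open Finset

private def Bc (m e : ℕ) : ℕ := (m+e).choose (2*e) + (m+e-1).choose (2*e)

private lemma pascal (M j : ℕ) :
    (M+3).choose (2*j+4) + (M+2).choose (2*j+4) + (M+1).choose (2*j+4) + M.choose (2*j+4)
      = 2*((M+2).choose (2*j+4)) + 2*((M+1).choose (2*j+4))
        + (M+1).choose (2*j+2) + M.choose (2*j+2) := by
  simp only [Nat.choose_succ_succ, Nat.succ_eq_add_one,
    show (2*j+2)+1 = 2*j+3 by omega, show (2*j+3)+1=2*j+4 by omega,
    show 2*j+1+1 = 2*j+2 by omega]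
  omega

private lemma mid (n j : ℕ) :
    Bc (n+3) (j+2) + Bc (n+1) (j+2) = 2 * Bc (n+2) (j+2) + Bc (n+2) (j+1) := by
  have p := pascal (n+j+2) j
  simp only [Bc]
  rw [show n+3+(j+2)-1 = (n+j+2)+2 by omega, show n+1+(j+2)-1 = (n+j+2) by omega,
    show n+2+(j+2)-1 = (n+j+2)+1 by omega, show n+2+(j+1)-1 = (n+j+2) by omega,
    show n+3+(j+2) = (n+j+2)+3 by omega,
    show n+1+(j+2) = (n+j+2)+1 by omega,
    show n+2+(j+2) = (n+j+2)+2 by omega,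
    show n+2+(j+1) = (n+j+2)+1 by omega,
    show 2*(j+2) = 2*j+4 by omega, show 2*(j+1) = 2*j+2 by omega]
  omega

private lemma bot1 (n : ℕ) : Bc (n+3) 1 + Bc (n+1) 1 = 2 * Bc (n+2) 1 + 2 := by
  simp only [Bc]
  rw [show n+3+1-1 = n+3 by omega, show n+1+1-1 = n+1 by omega,
    show n+2+1-1 = n+2 by omega,
    show n+3+1 = n+4 by omega, show n+1+1 = n+2 by omega,
    show n+2+1 = n+3 by omega, show 2*1 = 2 by omega]
  simp only [Nat.choose_succ_succ, Nat.succ_eq_add_one, Nat.choose_one_right,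
    Nat.choose_zero_right, show (0:ℕ)+1 = 1 by omega, show (1:ℕ)+1 = 2 by omega]
  omega

private lemma top1 (n : ℕ) : Bc (n+3) (n+2) = 2 * Bc (n+2) (n+2) + Bc (n+2) (n+1) := by
  simp only [Bc]
  rw [show n+3+(n+2)-1 = 2*n+4 by omega, show n+2+(n+2)-1 = (2*n+3) by omega,
    show n+2+(n+1)-1 = 2*n+2 by omega,
    show n+3+(n+2) = (2*n+4)+1 by omega,
    show n+2+(n+2) = 2*n+4 by omega,
    show n+2+(n+1) = (2*n+2)+1 by omega,
    show 2*(n+2) = 2*n+4 by omega, show 2*(n+1) = 2*n+2 by omega]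
  rw [Nat.choose_eq_zero_of_lt (show 2*n+3 < 2*n+4 by omega)]
  simp [Nat.choose_succ_self_right, Nat.choose_self]
  omega

private lemma top0 (n : ℕ) : Bc (n+3) (n+3) = Bc (n+2) (n+2) := by
  simp only [Bc]
  rw [show n+3+(n+3)-1 = 2*n+5 by omega, show n+2+(n+2)-1 = 2*n+3 by omega,
    show n+3+(n+3) = 2*n+6 by omega,
    show n+2+(n+2) = 2*n+4 by omega,
    show 2*(n+3) = 2*n+6 by omega, show 2*(n+2) = 2*n+4 by omega]
  rw [Nat.choose_eq_zero_of_lt (show 2*n+5 < 2*n+6 by omega),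
    Nat.choose_eq_zero_of_lt (show 2*n+3 < 2*n+4 by omega), Nat.choose_self, Nat.choose_self]

private lemma coeffS (a b k : ℕ) (f : ℕ → ℚ) :
    (∑ e ∈ Icc a b, C (f e) * (-X : ℚ[X])^e).coeff k
      = if k ∈ Icc a b then (-1)^k * f k else 0 := by
  have h : ∀ e : ℕ, C (f e) * (-X : ℚ[X])^e = C ((-1)^e * f e) * X^e := by
    intro e
    rw [neg_pow]
    rw [show ((-1 : ℚ[X])) = C (-1) by simp]
    rw [← mul_assoc, ← C_pow, ← C_mul, mul_comm (f e)]
  simp only [h, finset_sum_coeff, coeff_C_mul, coeff_X_pow]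
  simp only [mul_ite, mul_one, mul_zero]
  rw [Finset.sum_ite_eq (Icc a b) k (fun e => (-1)^e * f e)]

private lemma AB (m e : ℕ) (h1 : 1 ≤ e) (h2 : e ≤ m) :
    ((m+e).choose (m-e) : ℚ) * (2*m) / ((m:ℚ)+e) = (Bc m e : ℚ) := by
  have hne : ((m:ℚ)+e) ≠ 0 := by
    have h : 0 < m + e := by omega
    have : (0:ℚ) < (m:ℚ)+e := by exact_mod_cast h
    exact ne_of_gt this
  rw [div_eq_iff hne]
  obtain ⟨d, rfl⟩ := Nat.exists_eq_add_of_le h2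
  cases d with
  | zero =>
    simp only [Bc]
    rw [show e+0-e = 0 by omega, Nat.choose_zero_right,
      show e+0+e = 2*e by omega,Nat.choose_self,
      Nat.choose_eq_zero_of_lt (show 2*e-1 < 2*e by omega)]
    push_cast
    ring
  | succ d' =>
    simp only [Bc]
    rw [show e+(d'+1)-e = d'+1 by omega,
      show e+(d'+1)+e-1 = 2*e+d' by omega,
      show e+(d'+1)+e = (2*e+d')+1 by omega]
    have hsym : ((2*e+d')+1).choose (d'+1) = ((2*e+d')+1).choose (2*e) := by
      rw [show d'+1 = (2*e+d'+1) - (2*e) by omega]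
      exact Nat.choose_symm (by omega)
    rw [hsym]
    have hB := Nat.choose_mul_succ_eq (2*e+d') (2*e)
    rw [show 2*e+d'+1 - 2*e = d'+1 by omega] at hB
    have hBq : ((2*e+d').choose (2*e) : ℚ) * (2*e+d'+1)
        = ((2*e+d'+1).choose (2*e) : ℚ) * (d'+1) := by exact_mod_cast hB
    push_cast
    push_cast at hBq
    linear_combination -hBq

private lemma key : ∀ n : ℕ,
    ((dickson 1 (1:ℚ) (n+1)).comp (2 - X) - 2
        = ∑ e ∈ Finset.Icc 1 (n+1), C ((Bc (n+1) e : ℚ)) * (-X)^e)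
    ∧ ((dickson 1 (1:ℚ) (n+2)).comp (2 - X) - 2
        = ∑ e ∈ Finset.Icc 1 (n+2), C ((Bc (n+2) e : ℚ)) * (-X)^e) := by
  intro n
  induction n with
  | zero =>
    constructor
    · rw [show (0:ℕ)+1 = 1 by omega, dickson_one]
      rw [Finset.Icc_self, Finset.sum_singleton]
      norm_num [Bc]
    · rw [show (0:ℕ)+2 = 2 by omega, dickson_two]
      rw [show Finset.Icc 1 2 = {1, 2} by rfl]
      rw [Finset.sum_insert (by decide), Finset.sum_singleton]
      norm_num [Bc]
      rw [map_ofNat C 4]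
      ring
  | succ n ih =>
    refine ⟨ih.2, ?_⟩
    have hrec := dickson_add_two 1 (1:ℚ) (n+1)
    rw [show n+1+2 = n+3 by omega, show n+1+1 = n+2 by omega] at hrec
    rw [show n+1+2 = n+3 by omega]
    rw [hrec]
    simp only [sub_comp, mul_comp, X_comp, C_1, one_mul]
    have h2 : (dickson 1 (1:ℚ) (n+2)).comp (2 - X)
        = (∑ e ∈ Finset.Icc 1 (n+2), C ((Bc (n+2) e : ℚ)) * (-X)^e) + 2 := by
      rw [← ih.2]; ring
    have h1 : (dickson 1 (1:ℚ) (n+1)).comp (2 - X)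
        = (∑ e ∈ Finset.Icc 1 (n+1), C ((Bc (n+1) e : ℚ)) * (-X)^e) + 2 := by
      rw [← ih.1]; ring
    rw [h2, h1]
    have c2 : (C (2:ℚ)) = 2 := map_ofNat C 2
    have cm2 : (C (-2:ℚ)) = -2 := by
      rw [map_neg, c2]
    have hT : (-X : ℚ[X]) * (∑ e ∈ Finset.Icc 1 (n+2), C ((Bc (n+2) e : ℚ)) * (-X)^e)
        = ∑ e ∈ Finset.Icc 2 (n+3), C ((Bc (n+2) (e-1) : ℚ)) * (-X)^e := by
      rw [Finset.mul_sum]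
      rw [show Finset.Icc 2 (n+3) = (Finset.Icc 1 (n+2)).map (addRightEmbedding 1) from by
        rw [Finset.map_add_right_Icc]]
      rw [Finset.sum_map]
      refine Finset.sum_congr rfl ?_
      intro e _
      simp only [addRightEmbedding_apply, Nat.add_sub_cancel]
      rw [pow_succ]
      ring
    rw [show (2 - X) * ((∑ e ∈ Finset.Icc 1 (n+2), C ((Bc (n+2) e : ℚ)) * (-X)^e) + 2)
          - ((∑ e ∈ Finset.Icc 1 (n+1), C ((Bc (n+1) e : ℚ)) * (-X)^e) + 2) - 2
        = C 2 * (∑ e ∈ Finset.Icc 1 (n+2), C ((Bc (n+2) e : ℚ)) * (-X)^e)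
          + (-X) * (∑ e ∈ Finset.Icc 1 (n+2), C ((Bc (n+2) e : ℚ)) * (-X)^e)
          - (∑ e ∈ Finset.Icc 1 (n+1), C ((Bc (n+1) e : ℚ)) * (-X)^e)
          + C (-2) * X from by rw [c2, cm2]; ring]
    rw [hT]
    ext k
    simp only [coeff_add, coeff_sub, coeff_C_mul, coeffS, coeff_X, Finset.mem_Icc]
    by_cases h0 : k = 0
    · subst h0
      split_ifs <;> first | (exfalso; first | assumption | omega) | norm_num
    by_cases hbig : n+3 < k
    · split_ifs <;> first | (exfalso; first | assumption | omega) | norm_num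
    by_cases hone : k = 1
    · subst hone
      split_ifs <;> try (exfalso; omega)
      have hq : ((Bc (n+3) 1 : ℚ)) + (Bc (n+1) 1 : ℚ) = 2 * (Bc (n+2) 1 : ℚ) + 2 := by
        exact_mod_cast bot1 n
      norm_num
      linarith [hq]
    by_cases hmid : k ≤ n+1
    · obtain ⟨j, rfl⟩ := Nat.exists_eq_add_of_le (show 2 ≤ k by omega)
      rw [show 2+j = j+2 by omega]
      rw [show j+2-1 = j+1 by omega]
      split_ifs <;> try (exfalso; omega)
      have hq : ((Bc (n+3) (j+2) : ℚ)) + Bc (n+1) (j+2)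
          = 2 * Bc (n+2) (j+2) + Bc (n+2) (j+1) := by exact_mod_cast mid n j
      linear_combination (-((-1:ℚ))^(j+2)) * hq
    by_cases htop : k = n+2
    · subst htop
      rw [show n+2-1 = n+1 by omega]
      split_ifs <;> try (exfalso; omega)
      have hq : ((Bc (n+3) (n+2) : ℚ)) = 2 * Bc (n+2) (n+2) + Bc (n+2) (n+1) := by
        exact_mod_cast top1 n
      linear_combination (-((-1:ℚ))^(n+2)) * hq
    · have hke : k = n+3 := by omega
      subst hke
      rw [show n+3-1 = n+2 by omega]
      split_ifs <;> try (exfalso; omega)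
      have hq : ((Bc (n+3) (n+3) : ℚ)) = Bc (n+2) (n+2) := by exact_mod_cast top0 n
      linear_combination (-((-1:ℚ))^(n+3)) * hq

end AuxStatement5

/-- For `n ≥ 1` one has in `ℚ[s]` the identity `Dₙ(2 - s) - 2 = s·qₙ(s)` where `Dₙ` is the
Dickson polynomial of the first kind with parameter `1` and
`qₙ(s) = -Σ_{e=1}^{n} (C(n+e, n-e)·2n/(n+e))·(-s)^{e-1}`. -/
theorem statement5 (n : ℕ) (hn : 1 ≤ n) :
    (Polynomial.dickson 1 (1 : ℚ) n).comp (2 - Polynomial.X) - 2 =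
      Polynomial.X *
        (-(∑ e ∈ Finset.Icc 1 n,
            Polynomial.C ((((n + e).choose (n - e) : ℚ)) * (2 * n) / (n + e)) *
              (-Polynomial.X) ^ (e - 1))) := by
  obtain ⟨m, rfl⟩ := Nat.exists_eq_add_of_le hn
  rw [show 1+m = m+1 by omega]
  rw [(key m).1]
  rw [mul_neg, Finset.mul_sum, ← Finset.sum_neg_distrib]
  refine Finset.sum_congr rfl ?_
  intro e he
  rw [Finset.mem_Icc] at he
  rw [AB (m+1) e he.1 he.2]
  obtain ⟨j, rfl⟩ := Nat.exists_eq_add_of_le he.1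
  rw [show 1+j = j+1 by omega, show j+1-1 = j by omega, pow_succ]
  ring
end

section
/- For all natural numbers n ≥ 1 and e with 1 ≤ e ≤ n, the integer n + e divides 2n · binomial(n+e, n-e). Consequently each coefficient binomial(n+e, n-e)·2n/(n+e) appearing in the explicit formula for the polynomial qₙ is an integer. -/
/-- For all `1 ≤ e ≤ n` the integer `n + e` divides `2n · C(n+e, n-e)`, so the coefficients
`C(n+e, n-e)·2n/(n+e)` of the polynomial `qₙ` are integers. -/
theorem statement6 (n e : ℕ) (hn : 1 ≤ n) (he : 1 ≤ e) (hen : e ≤ n) :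
    (n + e) ∣ 2 * n * (n + e).choose (n - e) := by
  have h1 : 2 * n = (n + e) + (n - e) := by omega
  rw [h1, add_mul]
  apply dvd_add (dvd_mul_right _ _)
  rcases Nat.eq_or_lt_of_le hen with h | h
  · subst h; simp
  · obtain ⟨k, hk⟩ : ∃ k, n - e = k + 1 := ⟨n - e - 1, by omega⟩
    obtain ⟨m, hm⟩ : ∃ m, n + e = m + 1 := ⟨n + e - 1, by omega⟩
    rw [hk, hm]
    exact ⟨m.choose k, by rw [mul_comm]; exact (Nat.add_one_mul_choose_eq m k).symm⟩
end

section
/- For every natural number m ≥ 1 there exists a unique polynomial p_m ∈ ℤ[t] such that in the formal power series ring ℤ[[t]] one has (1-t)^{m+1} · Σ_{r≥1} r^m·t^r = t·p_m(t); moreover p_m is monic of degree m - 1. -/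
/-!
The `n`-th coefficient of `(1 - t)^(m+1) · Σ r^m t^r` is `Σ_{k ≤ n} (-1)^k C(m+1,k) (n-k)^m`.
For `n > m` this is the `(m+1)`-st finite difference of the degree-`m` polynomial `x^m`, hence
zero; for `n = m` it is that vanishing difference minus its last term `(-1)^(m+1) (-1)^m = -1`,
hence `1`; for `n = 0` it is `0^m = 0`. So the product is `t` times a polynomial with top
coefficient `1` in degree `m - 1`, and this polynomial is unique because `t` is cancellable.
-/

open Finset PowerSeries

section

variable {R : Type*} [CommRing R]

theorem alternating_sum_range_choose_mul_sub_pow_eq_zero {m n : ℕ} (h : m < n) (y : R) :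
    ∑ k ∈ range (n + 1), (-1) ^ k * n.choose k * (y - k) ^ m = 0 := by
  have hdiff := fwdDiff_iter_eq_sum_shift (1 : R) (fun x ↦ x ^ m) n (y - n)
  rw [fwdDiff_iter_pow_eq_zero_of_lt h, Pi.zero_apply, ← sum_range_reflect] at hdiff
  rw [hdiff]
  refine sum_congr rfl fun k hk ↦ ?_
  have hk : k ≤ n := Nat.lt_succ_iff.mp (mem_range.mp hk)
  rw [Nat.add_sub_cancel, Nat.sub_sub_self hk, Nat.choose_symm hk, nsmul_eq_mul, Nat.cast_sub hk,
    zsmul_eq_mul]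
  push_cast
  ring

namespace PowerSeries

theorem coeff_one_sub_X_pow (N j : ℕ) :
    coeff j ((1 - X : R⟦X⟧) ^ N) = (-1) ^ j * N.choose j := by
  have : (1 - X : R⟦X⟧) ^ N = rescale (-1) ((1 + Polynomial.X) ^ N : Polynomial R) := by
    simp [sub_eq_add_neg]
  rw [this, coeff_rescale, Polynomial.coeff_coe, Polynomial.coeff_one_add_X_pow]

theorem coeff_one_sub_X_pow_mul_mk_pow (N m n : ℕ) :
    coeff n ((1 - X : R⟦X⟧) ^ N * mk fun r ↦ (r : R) ^ m) =
      ∑ k ∈ range (n + 1), (-1) ^ k * N.choose k * ((n : R) - k) ^ m := by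
  rw [coeff_mul, Nat.sum_antidiagonal_eq_sum_range_succ_mk]
  refine sum_congr rfl fun k hk ↦ ?_
  rw [coeff_one_sub_X_pow, coeff_mk, Nat.cast_sub (Nat.lt_succ_iff.mp (mem_range.mp hk))]

theorem coeff_zero_one_sub_X_pow_mul_mk_pow (N : ℕ) {m : ℕ} (hm : m ≠ 0) :
    coeff 0 ((1 - X : R⟦X⟧) ^ N * mk fun r ↦ (r : R) ^ m) = 0 := by
  simp [coeff_one_sub_X_pow_mul_mk_pow, hm]

theorem coeff_one_sub_X_pow_succ_mul_mk_pow_of_lt {m n : ℕ} (h : m < n) :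
    coeff n ((1 - X : R⟦X⟧) ^ (m + 1) * mk fun r ↦ (r : R) ^ m) = 0 := by
  rw [coeff_one_sub_X_pow_mul_mk_pow,
    ← alternating_sum_range_choose_mul_sub_pow_eq_zero m.lt_succ_self (n : R)]
  refine (sum_subset (range_subset_range.mpr (by omega)) fun k hk hk' ↦ ?_).symm
  simp [Nat.choose_eq_zero_of_lt (by simp at hk hk'; omega : m + 1 < k)]

theorem coeff_self_one_sub_X_pow_succ_mul_mk_pow (m : ℕ) :
    coeff m ((1 - X : R⟦X⟧) ^ (m + 1) * mk fun r ↦ (r : R) ^ m) = 1 := by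
  have hsum := alternating_sum_range_choose_mul_sub_pow_eq_zero m.lt_succ_self (m : R)
  have hlast :
      (-1 : R) ^ (m + 1) * (m + 1).choose (m + 1) * ((m : R) - (m + 1 : ℕ)) ^ m = -1 := by
    rw [Nat.choose_self, Nat.cast_one, mul_one, Nat.cast_succ, sub_add_cancel_left, ← pow_add]
    simp
  rw [sum_range_succ, hlast] at hsum
  rw [coeff_one_sub_X_pow_mul_mk_pow]
  linear_combination hsum

theorem exists_eq_X_mul_coe_of_coeff_eq_zero {f : R⟦X⟧} {d : ℕ} (h₀ : coeff 0 f = 0)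
    (hd : ∀ n, d < n → coeff n f = 0) : ∃ p : Polynomial R, f = X * (p : R⟦X⟧) := by
  refine ⟨trunc d (mk fun i ↦ coeff (i + 1) f), ext fun n ↦ ?_⟩
  cases n with
  | zero => simp [h₀]
  | succ n =>
    rw [coeff_succ_X_mul, Polynomial.coeff_coe, coeff_trunc, coeff_mk]
    split_ifs with hn
    · rfl
    · exact hd (n + 1) (by omega)

end PowerSeries

theorem Polynomial.monic_and_natDegree_eq_of_coeff {p : Polynomial R} [Nontrivial R] {d : ℕ}
    (hd : p.coeff d = 1) (hlt : ∀ i, d < i → p.coeff i = 0) : p.Monic ∧ p.natDegree = d := by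
  have hle : p.natDegree ≤ d := Polynomial.natDegree_le_iff_coeff_eq_zero.mpr fun i hi ↦
    hlt i (by exact_mod_cast hi)
  exact ⟨Polynomial.monic_of_natDegree_le_of_coeff_eq_one d hle hd,
    Polynomial.natDegree_eq_of_le_of_coeff_ne_zero hle (by simp [hd])⟩

end

/-- For every `m ≥ 1` there is a unique polynomial `p ∈ ℤ[t]` with
`(1-t)^(m+1) · Σ_{r≥1} r^m·t^r = t·p(t)` in `ℤ[[t]]`; moreover `p` is monic of
degree `m - 1` (it is the `m`-th Eulerian polynomial). -/
theorem statement7 (m : ℕ) (hm : 1 ≤ m) :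
    (∃! p : Polynomial ℤ,
        (1 - PowerSeries.X) ^ (m + 1) * PowerSeries.mk (fun r => (r : ℤ) ^ m) =
          PowerSeries.X * (p : PowerSeries ℤ)) ∧
      ∀ p : Polynomial ℤ,
        (1 - PowerSeries.X) ^ (m + 1) * PowerSeries.mk (fun r => (r : ℤ) ^ m) =
            PowerSeries.X * (p : PowerSeries ℤ) →
          p.Monic ∧ p.natDegree = m - 1 := by
  set F : ℤ⟦X⟧ := (1 - X) ^ (m + 1) * PowerSeries.mk fun r ↦ (r : ℤ) ^ m
  obtain ⟨p, hp⟩ : ∃ p : Polynomial ℤ, F = X * (p : ℤ⟦X⟧) :=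
    exists_eq_X_mul_coe_of_coeff_eq_zero (coeff_zero_one_sub_X_pow_mul_mk_pow (m + 1) (by omega))
      fun _ ↦ coeff_one_sub_X_pow_succ_mul_mk_pow_of_lt
  have unique : ∀ q : Polynomial ℤ, F = X * (q : ℤ⟦X⟧) → q = p := fun q hq ↦
    Polynomial.coe_inj.mp (X_mul_inj.mp (hq.symm.trans hp))
  refine ⟨⟨p, hp, unique⟩, fun q hq ↦
    Polynomial.monic_and_natDegree_eq_of_coeff ?_ fun i hi ↦ ?_⟩
  · rw [← Polynomial.coeff_coe, ← coeff_succ_X_mul, ← hq, Nat.sub_add_cancel hm]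
    exact coeff_self_one_sub_X_pow_succ_mul_mk_pow m
  · rw [← Polynomial.coeff_coe, ← coeff_succ_X_mul, ← hq]
    exact coeff_one_sub_X_pow_succ_mul_mk_pow_of_lt (by omega)
end
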